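/- Let n ≥ 2 and d > 0. The determinant of the (n+3)×(n+3) Cayley-Menger matrix of points x, p₁,...,pₙ, y with φ-values φ(x,pᵢ) = φ(y,pᵢ) = d², φ(pᵢ,pⱼ) = (2+2/n)·d² for i ≠ j, φ(x,y) = t, and all self-values 0, equals ((−2n−2)^{n−1}/nⁿ)·d^{2n−2}·t·(n²·t − 4d²). -/

import Mathlib

/-!
Reorder the indices so that the border index, `x` and `y` come first. The block of the `pᵢ` is
`β • (J - 1)` with `β = (2 + 2/n) d²` and `J` the all-ones matrix: its determinant is
`(-β)^(n-1) (n-1) β` and all its row sums equal `(n-1) β`. The off-diagonal blocks have constant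
rows, so the Schur complement of the `pᵢ`-block is the Cayley-Menger matrix of `x, y` minus a
rank-one correction, a `3 × 3` determinant that is computed directly.
-/

/-- Cayley-Menger matrix of points x, p₁, ..., pₙ, y with φ(x,pᵢ) = φ(y,pᵢ) = d²,
φ(pᵢ,pⱼ) = (2+2/n)·d² for i ≠ j, φ(x,y) = t, and all self-values 0. -/
noncomputable def M12 (n : ℕ) (d t : ℂ) : Matrix (Fin (n + 3)) (Fin (n + 3)) ℂ :=
  Matrix.of fun i j =>
    if i = 0 then (if j = 0 then 0 else 1)
    else if j = 0 then 1
    else if i = j then 0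
    else if (i = 1 ∧ j = Fin.last (n + 2)) ∨ (i = Fin.last (n + 2) ∧ j = 1) then t
    else if i = 1 ∨ j = 1 ∨ i = Fin.last (n + 2) ∨ j = Fin.last (n + 2) then d ^ 2
    else (2 + 2 / (n : ℂ)) * d ^ 2

open Matrix

namespace Matrix

variable {ι m K : Type*} [Fintype ι] [DecidableEq ι] [Fintype m] [DecidableEq m] [Field K]

theorem det_one_add_vecMulVec (u v : ι → K) : det (1 + vecMulVec u v) = 1 + v ⬝ᵥ u := by
  rw [vecMulVec_eq Unit, det_one_add_replicateCol_mul_replicateRow]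

theorem det_smul_one_add_smul_vecMulVec_one [Nonempty ι] {a : K} (ha : a ≠ 0) (b : K) :
    det (a • 1 + b • vecMulVec 1 1 : Matrix ι ι K) =
      a ^ (Fintype.card ι - 1) * (a + Fintype.card ι * b) := by
  have hsplit : (a • 1 + b • vecMulVec 1 1 : Matrix ι ι K) =
      a • (1 + vecMulVec ((b / a) • 1) 1) := by
    rw [smul_add, smul_vecMulVec, smul_smul, mul_div_cancel₀ _ ha]
  obtain ⟨k, hk⟩ := Nat.exists_eq_succ_of_ne_zero (Fintype.card_ne_zero (α := ι))
  rw [hsplit, det_smul, det_one_add_vecMulVec, dotProduct_smul, dotProduct_one]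
  simp only [Pi.one_apply, Finset.sum_const, Finset.card_univ, nsmul_eq_mul, mul_one, smul_eq_mul]
  rw [hk, Nat.succ_sub_one, pow_succ]
  field_simp

theorem smul_one_add_smul_vecMulVec_one_mulVec_one (a b : K) :
    (a • 1 + b • vecMulVec 1 1 : Matrix ι ι K) *ᵥ 1 = (a + Fintype.card ι * b) • 1 := by
  rw [add_mulVec, smul_mulVec, smul_mulVec, one_mulVec, vecMulVec_mulVec, dotProduct_one]
  ext i
  simp
  ring

theorem det_fromBlocks_vecMulVec (A : Matrix m m K) (u v : m → K) (x y : ι → K)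
    (D : Matrix ι ι K) (hD : IsUnit D.det) :
    det (fromBlocks A (vecMulVec u x) (vecMulVec y v) D) =
      det D * det (A - (x ⬝ᵥ (D⁻¹ *ᵥ y)) • vecMulVec u v) := by
  let := D.invertibleOfIsUnitDet hD
  rw [det_fromBlocks₂₂, invOf_eq_nonsing_inv, vecMulVec_mul, vecMulVec_mul_vecMulVec,
    dotProduct_mulVec, vecMulVec_smul]

theorem det_fromBlocks_vecMulVec_one [Nonempty ι] (A : Matrix m m K) (u v : m → K) {a b : K}
    (ha : a ≠ 0) (hab : a + Fintype.card ι * b ≠ 0) :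
    det (fromBlocks A (vecMulVec u 1) (vecMulVec 1 v) (a • 1 + b • vecMulVec 1 1 : Matrix ι ι K)) =
      a ^ (Fintype.card ι - 1) * (a + Fintype.card ι * b) *
        det (A - (Fintype.card ι / (a + Fintype.card ι * b)) • vecMulVec u v) := by
  have hdet := det_smul_one_add_smul_vecMulVec_one (ι := ι) ha b
  have hmul := smul_one_add_smul_vecMulVec_one_mulVec_one (ι := ι) a b
  set D : Matrix ι ι K := a • 1 + b • vecMulVec 1 1
  have hD : IsUnit D.det := by
    rw [hdet]
    exact (mul_ne_zero (pow_ne_zero _ ha) hab).isUnit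
  have hinv : D⁻¹ *ᵥ 1 = (a + Fintype.card ι * b)⁻¹ • 1 := by
    have h := congrArg (D⁻¹ *ᵥ ·) hmul
    simp only [mulVec_mulVec, nonsing_inv_mul _ hD, one_mulVec, mulVec_smul] at h
    exact (eq_inv_smul_iff₀ hab).mpr h.symm
  rw [det_fromBlocks_vecMulVec _ _ _ _ _ _ hD, hdet, hinv, dotProduct_smul, dotProduct_one]
  simp [div_eq_inv_mul]

theorem det_sub_smul_vecMulVec_fin_three {R : Type*} [CommRing R] (s c t : R) :
    det (!![0, 1, 1; 1, 0, t; 1, t, 0] - s • vecMulVec ![1, c, c] ![1, c, c]) =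
      t * (s * t + 2 - 4 * s * c) := by
  rw [det_fin_three]
  simp
  ring

end Matrix

/-- The block `Fin 3` holds the border index `0` and the points `x = 1`, `y = Fin.last`;
the block `Fin n` holds the points `pᵢ`, in some order. -/
def cayleyMengerIndexEquiv (n : ℕ) : Fin 3 ⊕ Fin n ≃ Fin (n + 3) :=
  (finSumFinEquiv.trans (finCongr (Nat.add_comm 3 n))).trans
    (Equiv.swap ⟨2, by omega⟩ (Fin.last (n + 2)))

section

variable (n : ℕ)

lemma cayleyMengerIndexEquiv_inl_zero : cayleyMengerIndexEquiv n (.inl 0) = 0 := by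
  simp [cayleyMengerIndexEquiv, Equiv.swap_apply_def, Fin.ext_iff]

lemma cayleyMengerIndexEquiv_inl_one : cayleyMengerIndexEquiv n (.inl 1) = 1 := by
  simp [cayleyMengerIndexEquiv, Equiv.swap_apply_def, Fin.ext_iff]

lemma cayleyMengerIndexEquiv_inl_two : cayleyMengerIndexEquiv n (.inl 2) = Fin.last (n + 2) :=
  Equiv.swap_apply_left (⟨2, by omega⟩ : Fin (n + 3)) _

end

lemma M12_submatrix_cayleyMengerIndexEquiv (n : ℕ) (d t : ℂ) :
    (M12 n d t).submatrix (cayleyMengerIndexEquiv n) (cayleyMengerIndexEquiv n) =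
      fromBlocks !![0, 1, 1; 1, 0, t; 1, t, 0] (vecMulVec ![1, d ^ 2, d ^ 2] 1)
        (vecMulVec 1 ![1, d ^ 2, d ^ 2])
        (-((2 + 2 / (n : ℂ)) * d ^ 2) • 1 + ((2 + 2 / (n : ℂ)) * d ^ 2) • vecMulVec 1 1) := by
  have h0 := cayleyMengerIndexEquiv_inl_zero n
  have h1 := cayleyMengerIndexEquiv_inl_one n
  have h2 := cayleyMengerIndexEquiv_inl_two n
  set e := cayleyMengerIndexEquiv n
  have hne (k : Fin n) (i : Fin 3) : e (.inr k) ≠ e (.inl i) := fun h => by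
    simpa using e.injective h
  have hk0 (k : Fin n) : e (.inr k) ≠ 0 := h0 ▸ hne k 0
  have hk1 (k : Fin n) : e (.inr k) ≠ 1 := h1 ▸ hne k 1
  have hk2 (k : Fin n) : e (.inr k) ≠ Fin.last (n + 2) := h2 ▸ hne k 2
  have h1last : (1 : Fin (n + 3)) ≠ Fin.last (n + 2) := by simp [Fin.ext_iff]
  ext (i | k) (j | l)
  · fin_cases i <;> fin_cases j <;> simp [M12, h0, h1, h2, h1last, h1last.symm]
  · simp only [submatrix_apply, fromBlocks_apply₁₂, vecMulVec_apply, Pi.one_apply, mul_one]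
    fin_cases i <;> simp [M12, h0, h1, h2, hk0, hk1, hk2, eq_comm (b := e (.inr l))]
  · fin_cases j <;> simp [M12, h0, h1, h2, hk0, hk1, hk2]
  · simp [M12, hk0, hk1, hk2, e.injective.eq_iff, one_apply]
    split_ifs <;> ring

theorem stmt12 (n : ℕ) (hn : 2 ≤ n) (d : ℝ) (hd : 0 < d) (t : ℂ) :
    Matrix.det (M12 n (d : ℂ) t) =
      ((-2 * (n : ℂ) - 2) ^ (n - 1) / (n : ℂ) ^ n) * (d : ℂ) ^ (2 * n - 2) * t *
        ((n : ℂ) ^ 2 * t - 4 * (d : ℂ) ^ 2) := by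
  have hn0 : (n : ℂ) ≠ 0 := Nat.cast_ne_zero.mpr (by omega)
  have hn1 : (n : ℂ) - 1 ≠ 0 := sub_ne_zero.mpr (Nat.cast_ne_one.mpr (by omega))
  have hnsucc : (n : ℂ) + 1 ≠ 0 := by exact_mod_cast n.succ_ne_zero
  have hd0 : (d : ℂ) ≠ 0 := by exact_mod_cast hd.ne'
  have hdiag : -((2 + 2 / (n : ℂ)) * (d : ℂ) ^ 2) = (-2 * (n : ℂ) - 2) / n * (d : ℂ) ^ 2 := by
    field_simp; ring
  have hdiag0 : (-2 * (n : ℂ) - 2) / n * (d : ℂ) ^ 2 ≠ 0 := by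
    refine mul_ne_zero (div_ne_zero ?_ hn0) (pow_ne_zero _ hd0)
    rw [show -2 * (n : ℂ) - 2 = -2 * (n + 1) by ring]
    exact mul_ne_zero (by norm_num) hnsucc
  have hsum : (-2 * (n : ℂ) - 2) / n * (d : ℂ) ^ 2 + n * ((2 + 2 / (n : ℂ)) * (d : ℂ) ^ 2) =
      2 * ((n : ℂ) - 1) * (n + 1) / n * (d : ℂ) ^ 2 := by
    field_simp; ring
  have hsum0 : 2 * ((n : ℂ) - 1) * (n + 1) / n * (d : ℂ) ^ 2 ≠ 0 :=
    mul_ne_zero (div_ne_zero (mul_ne_zero (mul_ne_zero two_ne_zero hn1) hnsucc) hn0)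
      (pow_ne_zero _ hd0)
  have : Nonempty (Fin n) := ⟨⟨0, by omega⟩⟩
  rw [← det_submatrix_equiv_self (cayleyMengerIndexEquiv n), M12_submatrix_cayleyMengerIndexEquiv,
    hdiag, det_fromBlocks_vecMulVec_one _ _ _ hdiag0 (by rwa [Fintype.card_fin, hsum]),
    Fintype.card_fin, det_sub_smul_vecMulVec_fin_three, hsum,
    show 2 * n - 2 = 2 * (n - 1) by omega, pow_mul, mul_pow, div_pow,
    show (n : ℂ) ^ n = n ^ (n - 1) * n by rw [← pow_succ, Nat.sub_add_cancel (by omega)]]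
  field_simp
  ring
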